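/- arXiv:1302.0756 — 7 statements merged into one kernel-verified Lean document; each statement's English description precedes it below -/
import Mathlib

section
/- Let X^n, Y^n, Z^n be real sequences with Y^n ≥ 0 for all n, satisfying X^{n+1} ≤ X^n - Y^n + Z^n for all n, and suppose ∑_n Z^n < ∞. Then either X^n → -∞, or {X^n} converges to a finite value and ∑_n Y^n < ∞. -/
open Filter Topology

/-- Deterministic Robbins–Siegmund lemma. -/
theorem robbins_siegmund_deterministic
    (X Y Z : ℕ → ℝ)
    (hY : ∀ n, 0 ≤ Y n)
    (hrec : ∀ n, X (n + 1) ≤ X n - Y n + Z n)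
    (hZ : Summable Z) :
    Tendsto X atTop atBot ∨
      ((∃ l : ℝ, Tendsto X atTop (nhds l)) ∧ Summable Y) := by
  set S : ℕ → ℝ := fun n => ∑ k ∈ Finset.range n, Z k with hSdef
  set T : ℕ → ℝ := fun n => ∑ k ∈ Finset.range n, Y k with hTdef
  set V : ℕ → ℝ := fun n => X n + T n - S n with hVdef
  have hS : Tendsto S atTop (𝓝 (∑' n, Z n)) := hZ.hasSum.tendsto_sum_nat
  have hTmono : Monotone T := by
    apply monotone_nat_of_le_succ
    intro n
    simp only [hTdef, Finset.sum_range_succ]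
    linarith [hY n]
  have hTnonneg : ∀ n, 0 ≤ T n := fun n => Finset.sum_nonneg fun k _ => hY k
  have hVanti : Antitone V := by
    apply antitone_nat_of_succ_le
    intro n
    simp only [hVdef, hTdef, hSdef, Finset.sum_range_succ]
    linarith [hrec n]
  have hXeq : ∀ n, X n = V n + S n - T n := by intro n; simp [hVdef]
  by_cases hVbdd : BddBelow (Set.range V)
  · -- V converges
    have hV : Tendsto V atTop (𝓝 (⨅ n, V n)) := tendsto_atTop_ciInf hVanti hVbdd
    by_cases hTbdd : BddAbove (Set.range T)
    · right
      have hT : Tendsto T atTop (𝓝 (⨆ n, T n)) := tendsto_atTop_ciSup hTmono hTbdd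
      constructor
      · refine ⟨(⨅ n, V n) + (∑' n, Z n) - (⨆ n, T n), ?_⟩
        have := ((hV.add hS).sub hT)
        refine this.congr fun n => (hXeq n).symm
      · obtain ⟨c, hc⟩ := hTbdd
        exact summable_of_sum_range_le hY fun n => hc ⟨n, rfl⟩
    · left
      have hT : Tendsto T atTop atTop := tendsto_atTop_atTop_of_monotone' hTmono hTbdd
      have : Tendsto (fun n => V n + S n - T n) atTop atBot := by
        have h1 : Tendsto (fun n => -(T n)) atTop atBot := tendsto_neg_atTop_atBot.comp hT
        have := Tendsto.add_atBot (hV.add hS) h1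
        refine this.congr fun n => by ring
      exact this.congr fun n => (hXeq n).symm
  · left
    have hV : Tendsto V atTop atBot := by
      refine tendsto_atBot.2 fun b => ?_
      have : ∃ N, V N < b := by
        by_contra h
        push_neg at h
        exact hVbdd ⟨b, fun x ⟨n, hn⟩ => hn ▸ h n⟩
      obtain ⟨N, hN⟩ := this
      exact eventually_atTop.2 ⟨N, fun n hn => le_of_lt (lt_of_le_of_lt (hVanti hn) hN)⟩
    have hVS : Tendsto (fun n => V n + S n) atTop atBot := Tendsto.add_atBot hS hV |>.congr fun n => by ring
    refine tendsto_atBot_mono (fun n => ?_) hVS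
    rw [hXeq n]
    linarith [hTnonneg n]
end

section
/- Let K ⊆ ℝ^n be nonempty, closed, and convex, and let f̃ : K × K → ℝ be such that for each y ∈ K the function f̃(·; y) is strongly convex on K with a modulus c > 0 independent of y, and for each fixed x the gradient ∇_x f̃(x; ·) is Lipschitz on K with constant L independent of x. Let x̂(y) = argmin_{x ∈ K} f̃(x; y). Then x̂ is Lipschitz continuous on K with constant L/c: ‖x̂(y) - x̂(z)‖ ≤ (L/c)‖y - z‖ for all y, z ∈ K. -/
open RealInnerProductSpace

/-- Variational inequality at a constrained minimizer. -/
lemma vi_aux {n : ℕ} (K : Set (EuclideanSpace ℝ (Fin n))) (hKcv : Convex ℝ K)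
    (f : EuclideanSpace ℝ (Fin n) → ℝ) (g : EuclideanSpace ℝ (Fin n))
    {a : EuclideanSpace ℝ (Fin n)} (ha : a ∈ K)
    (hg : HasGradientAt f g a) (hmin : IsMinOn f K a) :
    ∀ w ∈ K, 0 ≤ ⟪g, w - a⟫ := by
  intro w hw
  have hfd : HasFDerivWithinAt f (InnerProductSpace.toDual ℝ _ g) K a :=
    ((hasGradientAt_iff_hasFDerivAt.mp hg)).hasFDerivWithinAt
  have htc : w - a ∈ posTangentConeAt K a :=
    sub_mem_posTangentConeAt_of_segment_subset (hKcv.segment_subset ha hw)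
  have := (hmin.localize).hasFDerivWithinAt_nonneg hfd htc
  simpa using this

/-- Lipschitz continuity of the best-response map of a uniformly strongly convex
parametric surrogate (Proposition 1(a), with explicit constant L/c). -/
theorem best_response_lipschitz
    {n : ℕ} (K : Set (EuclideanSpace ℝ (Fin n)))
    (hKne : K.Nonempty) (hKcl : IsClosed K) (hKcv : Convex ℝ K)
    (ftilde : EuclideanSpace ℝ (Fin n) → EuclideanSpace ℝ (Fin n) → ℝ)
    (F : EuclideanSpace ℝ (Fin n) → EuclideanSpace ℝ (Fin n) → EuclideanSpace ℝ (Fin n))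
    (hF : ∀ x y, HasGradientAt (fun x' => ftilde x' y) (F x y) x)
    (c : ℝ) (hc : 0 < c)
    (hsc : ∀ y ∈ K, ∀ x ∈ K, ∀ w ∈ K,
      ⟪x - w, F x y - F w y⟫ ≥ c * ‖x - w‖ ^ 2)
    (L : ℝ)
    (hLip : ∀ x, ∀ y ∈ K, ∀ w ∈ K, ‖F x y - F x w‖ ≤ L * ‖y - w‖)
    (xhat : EuclideanSpace ℝ (Fin n) → EuclideanSpace ℝ (Fin n))
    (hxhatK : ∀ y ∈ K, xhat y ∈ K)
    (hxhatmin : ∀ y ∈ K, IsMinOn (fun x => ftilde x y) K (xhat y)) :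
    ∀ y ∈ K, ∀ z ∈ K, ‖xhat y - xhat z‖ ≤ (L / c) * ‖y - z‖ := by
  intro y hy z hz
  set a := xhat y with ha
  set b := xhat z with hb
  have haK : a ∈ K := hxhatK y hy
  have hbK : b ∈ K := hxhatK z hz
  -- variational inequalities
  have VIy : 0 ≤ ⟪F a y, b - a⟫ :=
    vi_aux K hKcv (fun x' => ftilde x' y) (F a y) haK (hF a y) (hxhatmin y hy) b hbK
  have VIz : 0 ≤ ⟪F b z, a - b⟫ :=
    vi_aux K hKcv (fun x' => ftilde x' z) (F b z) hbK (hF b z) (hxhatmin z hz) a haK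
  have hstrong : c * ‖a - b‖ ^ 2 ≤ ⟪a - b, F a y - F b y⟫ := hsc y hy a haK b hbK
  have key : c * ‖a - b‖ ^ 2 ≤ ⟪a - b, F b z - F b y⟫ := by
    have h1 : ⟪a - b, F a y⟫ ≤ 0 := by
      have : ⟪F a y, b - a⟫ = -⟪a - b, F a y⟫ := by
        rw [real_inner_comm]; rw [show (b - a) = -(a - b) by abel, inner_neg_left]
      linarith [VIy, this ▸ VIy]
    have h2 : 0 ≤ ⟪a - b, F b z⟫ := by
      rwa [real_inner_comm] at VIz
    have e1 : ⟪a - b, F a y - F b y⟫ = ⟪a - b, F a y⟫ - ⟪a - b, F b y⟫ :=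
      inner_sub_right _ _ _
    have e2 : ⟪a - b, F b z - F b y⟫ = ⟪a - b, F b z⟫ - ⟪a - b, F b y⟫ :=
      inner_sub_right _ _ _
    linarith
  have hCS : ⟪a - b, F b z - F b y⟫ ≤ ‖a - b‖ * ‖F b z - F b y‖ :=
    real_inner_le_norm _ _
  have hL : ‖F b z - F b y‖ ≤ L * ‖z - y‖ := hLip b z hz y hy
  have hnorm : ‖z - y‖ = ‖y - z‖ := by rw [norm_sub_rev]
  have chain : c * ‖a - b‖ ^ 2 ≤ ‖a - b‖ * (L * ‖y - z‖) := by
    calc c * ‖a - b‖ ^ 2 ≤ ⟪a - b, F b z - F b y⟫ := key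
      _ ≤ ‖a - b‖ * ‖F b z - F b y‖ := hCS
      _ ≤ ‖a - b‖ * (L * ‖y - z‖) := by
          rw [← hnorm]; exact mul_le_mul_of_nonneg_left hL (norm_nonneg _)
  rcases eq_or_lt_of_le (norm_nonneg (a - b)) with h0 | h0
  · rw [← h0]
    rcases eq_or_ne y z with rfl | hne
    · simp
    · have hyz : 0 < ‖y - z‖ := by
        rw [norm_pos_iff]; exact sub_ne_zero_of_ne hne
      have hL0 : 0 ≤ L := by
        have := (norm_nonneg (F b y - F b z)).trans (hLip b y hy z hz)
        nlinarith
      positivity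
  · have : c * ‖a - b‖ ≤ L * ‖y - z‖ := by
      have := chain
      nlinarith
    rw [div_mul_eq_mul_div, le_div_iff₀ hc]
    nlinarith
end

section
/- Let γ⁰ = 1 and define γ^n = γ^{n-1}(1 - ε γ^{n-1}) for n ≥ 1, where ε ∈ (0, 1). Then γ^n ∈ (0, 1] for all n, the sequence {γ^n} is strictly decreasing, γ^n → 0, ∑_n γ^n = +∞, and ∑_n (γ^n)² < +∞. -/
open Filter Topology

/-- Properties of the diminishing step-size Rule #1:  γ⁰ = 1,
γⁿ = γⁿ⁻¹(1 - ε γⁿ⁻¹). -/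
theorem stepsize_rule_one_properties
    (ε : ℝ) (hε0 : 0 < ε) (hε1 : ε < 1)
    (γ : ℕ → ℝ) (h0 : γ 0 = 1)
    (hrec : ∀ n, γ (n + 1) = γ n * (1 - ε * γ n)) :
    (∀ n, 0 < γ n ∧ γ n ≤ 1) ∧
    StrictAnti γ ∧
    Tendsto γ atTop (nhds 0) ∧
    ¬ Summable γ ∧
    Summable (fun n => (γ n) ^ 2) := by
  -- basic bounds
  have hb : ∀ n, 0 < γ n ∧ γ n ≤ 1 := by
    intro n
    induction n with
    | zero => simp [h0]
    | succ n ih =>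
      obtain ⟨h1, h2⟩ := ih
      have hfac : 0 < 1 - ε * γ n := by nlinarith
      constructor
      · rw [hrec n]; positivity
      · rw [hrec n]; nlinarith
  have hpos : ∀ n, 0 < γ n := fun n => (hb n).1
  have hle1 : ∀ n, γ n ≤ 1 := fun n => (hb n).2
  have hfac : ∀ n, 0 < 1 - ε * γ n := by
    intro n; nlinarith [hpos n, hle1 n]
  have hdec : ∀ n, γ (n + 1) < γ n := by
    intro n
    rw [hrec n]
    nlinarith [mul_pos hε0 (mul_pos (hpos n) (hpos n))]
  -- inverse identity
  have hinv : ∀ n, (γ (n + 1))⁻¹ = (γ n)⁻¹ + ε / (1 - ε * γ n) := by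
    intro n
    rw [hrec n]
    field_simp [(hpos n).ne', (hfac n).ne']
    have hne : 1 - γ n * ε ≠ 0 := (by nlinarith [hfac n] : 0 < 1 - γ n * ε).ne'
    rw [one_add_div hne]; ring
  have hA : ∀ n, 1 + n * ε ≤ (γ n)⁻¹ := by
    intro n
    induction n with
    | zero => simp [h0]
    | succ n ih =>
      rw [hinv n]
      have : ε ≤ ε / (1 - ε * γ n) := by
        rw [le_div_iff₀ (hfac n)]
        nlinarith [mul_pos hε0 (mul_pos hε0 (hpos n))]
      push_cast
      nlinarith
  have hB : ∀ n, (γ n)⁻¹ ≤ 1 + n * (ε / (1 - ε)) := by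
    intro n
    induction n with
    | zero => simp [h0]
    | succ n ih =>
      rw [hinv n]
      have : ε / (1 - ε * γ n) ≤ ε / (1 - ε) := by
        apply div_le_div_of_nonneg_left hε0.le (by linarith) (by nlinarith [hpos n, hle1 n])
      push_cast
      nlinarith
  -- γ n ≤ (1 + n ε)⁻¹
  have hupper : ∀ n, γ n ≤ (1 + n * ε)⁻¹ := by
    intro n
    have h1 : (0:ℝ) < 1 + n * ε := by positivity
    have := inv_anti₀ h1 (hA n)
    simpa using this
  have hlower : ∀ n : ℕ, (1 + (n:ℝ) * (ε / (1 - ε)))⁻¹ ≤ γ n := by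
    intro n
    have := inv_anti₀ (inv_pos.2 (hpos n)) (hB n)
    simpa using this
  refine ⟨hb, strictAnti_nat_of_succ_lt hdec, ?_, ?_, ?_⟩
  · -- tendsto 0
    have ht : Tendsto (fun n : ℕ => (1 + n * ε)⁻¹) atTop (nhds 0) := by
      apply Tendsto.inv_tendsto_atTop
      apply tendsto_atTop_add_const_left
      exact Tendsto.atTop_mul_const hε0 tendsto_natCast_atTop_atTop
    exact squeeze_zero (fun n => (hpos n).le) hupper ht
  · -- not summable
    intro hs
    have hd : (0:ℝ) < 1 - ε := by linarith
    have key : ∀ n : ℕ, (1 - ε) * (1 / n) ≤ γ n := by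
      intro n
      match n with
      | 0 => simpa using (hpos 0).le
      | (m+1) =>
        have h2 : (0:ℝ) < (m:ℝ) + 1 := by positivity
        refine le_trans ?_ (hlower (m+1))
        have heq : (1 + ((m+1:ℕ):ℝ) * (ε/(1-ε)))⁻¹ = (1-ε)/((1-ε)+((m:ℝ)+1)*ε) := by
          have hden : (0:ℝ) < (1-ε)+((m:ℝ)+1)*ε := by positivity
          push_cast
          rw [eq_div_iff hden.ne']
          field_simp
        rw [heq, mul_one_div]
        push_cast
        apply div_le_div_of_nonneg_left hd.le (by positivity)
        nlinarith [Nat.cast_nonneg (α := ℝ) m]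
    have h1 : Summable (fun n : ℕ => (1 - ε) * (1 / (n:ℝ))) :=
      Summable.of_nonneg_of_le (fun n => by positivity) key hs
    have h2 : Summable (fun n : ℕ => 1 / (n:ℝ)) := by
      have := h1.mul_left (1-ε)⁻¹
      refine this.congr fun n => ?_
      field_simp
    exact Real.not_summable_one_div_natCast h2
  · -- summable squares
    rw [← summable_nat_add_iff 1]
    have base : Summable (fun n : ℕ => 1 / (n:ℝ) ^ 2) :=
      Real.summable_one_div_nat_pow.2 one_lt_two
    have shifted : Summable (fun n : ℕ => 1 / ((n:ℝ)+1) ^ 2) := by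
      have := (summable_nat_add_iff 1).2 base
      refine this.congr fun n => ?_
      push_cast
      ring
    refine Summable.of_nonneg_of_le (fun n => by positivity) (fun n => ?_)
      (shifted.mul_left (ε⁻¹ ^ 2))
    have hn1 : (0:ℝ) < ((n+1:ℕ):ℝ) * ε := by positivity
    calc γ (n+1) ^ 2 ≤ ((1 + ((n+1:ℕ):ℝ) * ε)⁻¹) ^ 2 :=
          pow_le_pow_left₀ (hpos _).le (hupper (n+1)) 2
      _ ≤ ((((n+1:ℕ):ℝ) * ε)⁻¹) ^ 2 := by
          apply pow_le_pow_left₀ (by positivity)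
          exact inv_anti₀ hn1 (by linarith)
      _ = ε⁻¹ ^ 2 * (1 / ((n:ℝ)+1) ^ 2) := by
          push_cast
          field_simp
end

section
/- Let a, b, τ, w, μ be positive reals. The scalar function φ(p) = w·log(a + p) - μ·p - (τ/2)(p - q)² (with q ≥ 0 given) restricted to p ≥ 0 attains its maximum at the point p* = [ (1/2)(q - a) - (1/(2τ))( μ - √( (μ - τ(q + a))² + 4τw ) ) ]₊, where [x]₊ = max(x, 0). -/
set_option maxHeartbeats 1000000


/-- Closed-form (multi-level waterfilling) maximizer of the per-carrier
proximal surrogate (equation (28) of the paper, single carrier). -/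
theorem waterfilling_closed_form
    (a b τ w μ q : ℝ)
    (ha : 0 < a) (hb : 0 < b) (hτ : 0 < τ) (hw : 0 < w) (hμ : 0 < μ)
    (hq : 0 ≤ q) :
    IsMaxOn
      (fun p => w * Real.log (a + p) - μ * p - (τ / 2) * (p - q) ^ 2)
      (Set.Ici (0 : ℝ))
      (max 0 ((1 / 2) * (q - a) -
        (1 / (2 * τ)) * (μ - Real.sqrt ((μ - τ * (q + a)) ^ 2 + 4 * τ * w)))) := by
  set Δ : ℝ := (μ - τ * (q + a)) ^ 2 + 4 * τ * w with hΔ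
  have hΔ0 : 0 ≤ Δ := by positivity
  set S : ℝ := Real.sqrt Δ with hSdef
  have hS0 : 0 ≤ S := Real.sqrt_nonneg _
  have hS2 : S ^ 2 = Δ := Real.sq_sqrt hΔ0
  set s : ℝ := (1 / 2) * (q - a) - (1 / (2 * τ)) * (μ - S) with hs
  intro p hp
  simp only [Set.mem_Ici] at hp
  simp only [Set.mem_setOf_eq]
  rcases le_or_gt 0 s with hspos | hsneg
  · -- interior case: maximizer is s, stationary point
    rw [max_eq_right hspos]
    have has : 0 < a + s := by linarith
    have hap : 0 < a + p := by linarith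
    -- key stationarity identity
    have key : (a + s) * (μ + τ * (s - q)) = w := by
      have hτ' : τ ≠ 0 := ne_of_gt hτ
      have : s = (τ * (q - a) - μ + S) / (2 * τ) := by
        rw [hs]; field_simp; ring
      rw [this]
      field_simp
      nlinarith [hS2, sq_nonneg S]
    -- log bound
    have hlog : Real.log (a + p) - Real.log (a + s) ≤ (a + p) / (a + s) - 1 := by
      have := Real.log_le_sub_one_of_pos (show 0 < (a + p) / (a + s) by positivity)
      rwa [Real.log_div (ne_of_gt hap) (ne_of_gt has)] at this
    have hlog' : w * (Real.log (a + p) - Real.log (a + s)) ≤ w * ((p - s) / (a + s)) := by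
      have h1 : (a + p) / (a + s) - 1 = (p - s) / (a + s) := by
        field_simp
        ring
      rw [← h1]
      exact mul_le_mul_of_nonneg_left hlog (le_of_lt hw)
    have hfrac : w * ((p - s) / (a + s)) = (p - s) * (μ + τ * (s - q)) := by
      rw [← key]; field_simp
    have hcomb : w * Real.log (a + p) - w * Real.log (a + s) ≤ (p - s) * (μ + τ * (s - q)) := by
      rw [← hfrac]; linarith
    have hid : μ * p - μ * s + τ / 2 * (p - q) ^ 2 - τ / 2 * (s - q) ^ 2
        - (p - s) * (μ + τ * (s - q)) = τ / 2 * (p - s) ^ 2 := by ring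
    have hnn : 0 ≤ τ / 2 * (p - s) ^ 2 := by positivity
    linarith [hcomb, hid, hnn]
  · -- boundary case: maximizer is 0
    rw [max_eq_left (le_of_lt hsneg)]
    have hap : 0 < a + p := by linarith
    -- from s < 0 deduce w ≤ a * (μ - τ * q)
    have hSle : S ≤ μ - τ * (q - a) := by
      by_contra hcon
      push_neg at hcon
      have heq : s = (1 / (2 * τ)) * (S - (μ - τ * (q - a))) := by
        rw [hs]; field_simp; ring
      have h1 : 0 < (1 / (2 * τ)) * (S - (μ - τ * (q - a))) :=
        mul_pos (by positivity) (by linarith)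
      rw [heq] at hsneg
      linarith
    have hkey : w ≤ a * (μ - τ * q) := by
      have h1 : Δ ≤ (μ - τ * (q - a)) ^ 2 := by
        calc Δ = S ^ 2 := hS2.symm
        _ ≤ (μ - τ * (q - a)) ^ 2 := by nlinarith [hS0]
      rw [hΔ] at h1
      nlinarith [h1, hτ]
    -- log bound at 0
    have hlog : Real.log (a + p) - Real.log a ≤ (a + p) / a - 1 := by
      have := Real.log_le_sub_one_of_pos (show 0 < (a + p) / a by positivity)
      rwa [Real.log_div (ne_of_gt hap) (ne_of_gt ha)] at this
    have hlog' : w * (Real.log (a + p) - Real.log a) ≤ w * (p / a) := by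
      have h1 : (a + p) / a - 1 = p / a := by field_simp; ring
      rw [← h1]
      exact mul_le_mul_of_nonneg_left hlog (le_of_lt hw)
    have hfrac : w * (p / a) ≤ (μ - τ * q) * p := by
      rw [div_eq_mul_inv, ← mul_assoc, ← sub_nonneg]
      have : (μ - τ * q) * p - w * p * a⁻¹ = (a * (μ - τ * q) - w) * p / a := by
        field_simp
      rw [this]
      exact div_nonneg (mul_nonneg (by linarith) hp) ha.le
    simp only [add_zero, mul_zero, zero_sub, sub_zero]
    nlinarith [hlog', hfrac, sq_nonneg p, mul_nonneg (mul_nonneg hτ.le hq) hp]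
end

section
/- Let U : ℝ^n → ℝ be continuously differentiable with ∇U Lipschitz with constant L on a closed convex set K, bounded below on K, and let x̂ : K → K satisfy (x̂(y) - y)ᵀ∇U(y) ≤ -c‖x̂(y) - y‖² on K with c > 0. Let {γ^n} ⊂ (0, 1] satisfy γ^n → 0 and ∑_n γ^n = ∞, and define x^{n+1} = x^n + γ^n(x̂(x^n) - x^n) from x⁰ ∈ K. Then liminf_{n→∞} ‖x̂(x^n) - x^n‖ = 0. -/
open RealInnerProductSpace Filter Topology

lemma descent_lemma {E : Type*} [NormedAddCommGroup E] [InnerProductSpace ℝ E] [CompleteSpace E]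
    (U : E → ℝ) (U' : E → E) (hU' : ∀ x, HasGradientAt U (U' x) x)
    (x v : E) (L : ℝ)
    (hL : ∀ t ∈ Set.Icc (0:ℝ) 1, ‖U' (x + t • v) - U' x‖ ≤ L * t * ‖v‖) :
    U (x + v) ≤ U x + ⟪v, U' x⟫ + L / 2 * ‖v‖ ^ 2 := by
  set g : ℝ → ℝ := fun t => U (x + t • v) - t * ⟪v, U' x⟫ - L / 2 * t ^ 2 * ‖v‖ ^ 2 with hg
  have hderiv : ∀ t : ℝ, HasDerivAt g
      (⟪v, U' (x + t • v)⟫ - ⟪v, U' x⟫ - L * t * ‖v‖ ^ 2) t := by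
    intro t
    have h1 : HasDerivAt (fun t : ℝ => x + t • v) v t := by
      simpa using ((hasDerivAt_id t).smul_const v).const_add x
    have h2 := ((hU' (x + t • v)).hasFDerivAt.comp_hasDerivAt t h1)
    have h2' : HasDerivAt (fun t : ℝ => U (x + t • v)) ⟪v, U' (x + t • v)⟫ t := by
      simpa [InnerProductSpace.toDual_apply_apply, real_inner_comm, Function.comp_def] using h2
    have h3 : HasDerivAt (fun t : ℝ => t * ⟪v, U' x⟫) ⟪v, U' x⟫ t := by
      simpa using (hasDerivAt_id t).mul_const ⟪v, U' x⟫
    have h4 : HasDerivAt (fun t : ℝ => L / 2 * t ^ 2 * ‖v‖ ^ 2) (L * t * ‖v‖ ^ 2) t := by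
      have := ((hasDerivAt_pow 2 t).const_mul (L / 2)).mul_const (‖v‖ ^ 2)
      refine this.congr_deriv ?_
      ring
    exact (h2'.sub h3).sub h4
  have hanti : AntitoneOn g (Set.Icc 0 1) := by
    apply antitoneOn_of_deriv_nonpos (convex_Icc 0 1)
    · exact fun t _ => ((hderiv t).continuousAt).continuousWithinAt
    · exact fun t _ => ((hderiv t).differentiableAt).differentiableWithinAt
    · intro t ht
      rw [interior_Icc] at ht
      rw [(hderiv t).deriv]
      have hcs : ⟪v, U' (x + t • v)⟫ - ⟪v, U' x⟫ ≤ ‖v‖ * ‖U' (x + t • v) - U' x‖ := by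
        rw [← inner_sub_right]
        exact real_inner_le_norm _ _
      have hbd := hL t ⟨le_of_lt ht.1, le_of_lt ht.2⟩
      nlinarith [norm_nonneg v, norm_nonneg (U' (x + t • v) - U' x)]
  have := hanti (Set.left_mem_Icc.2 zero_le_one) (Set.right_mem_Icc.2 zero_le_one) zero_le_one
  simp only [hg, zero_smul, add_zero, one_smul, zero_pow, one_pow, mul_zero, zero_mul, mul_one,
    sub_zero, one_mul] at this
  linarith

/-- Core convergence step of Theorem 1(b): with a diminishing, non-summable
step-size rule, the liminf of the best-response residual vanishes. -/
theorem diminishing_stepsize_liminf_zero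
    {n : ℕ} (K : Set (EuclideanSpace ℝ (Fin n)))
    (hKne : K.Nonempty) (hKcl : IsClosed K) (hKcv : Convex ℝ K)
    (U : EuclideanSpace ℝ (Fin n) → ℝ)
    (U' : EuclideanSpace ℝ (Fin n) → EuclideanSpace ℝ (Fin n))
    (hU' : ∀ x, HasGradientAt U (U' x) x)
    (L : ℝ) (hLip : ∀ x ∈ K, ∀ y ∈ K, ‖U' x - U' y‖ ≤ L * ‖x - y‖)
    (hbd : BddBelow (U '' K))
    (xhat : EuclideanSpace ℝ (Fin n) → EuclideanSpace ℝ (Fin n))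
    (hxhatK : ∀ y ∈ K, xhat y ∈ K)
    (c : ℝ) (hc : 0 < c)
    (hdesc : ∀ y ∈ K, ⟪xhat y - y, U' y⟫ ≤ -(c * ‖xhat y - y‖ ^ 2))
    (γ : ℕ → ℝ) (hγ0 : ∀ k, 0 < γ k) (hγ1 : ∀ k, γ k ≤ 1)
    (hγto0 : Tendsto γ atTop (nhds 0))
    (hγdiv : ¬ Summable γ)
    (x : ℕ → EuclideanSpace ℝ (Fin n))
    (hx0 : x 0 ∈ K)
    (hrec : ∀ k, x (k + 1) = x k + γ k • (xhat (x k) - x k)) :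
    liminf (fun k => ‖xhat (x k) - x k‖) atTop = 0 := by
  set L' : ℝ := max L 0 with hL'
  have hL'0 : 0 ≤ L' := le_max_right _ _
  have hLip' : ∀ a ∈ K, ∀ b ∈ K, ‖U' a - U' b‖ ≤ L' * ‖a - b‖ := fun a ha b hb =>
    (hLip a ha b hb).trans (mul_le_mul_of_nonneg_right (le_max_left _ _) (norm_nonneg _))
  -- iterates stay in K
  have hxK : ∀ k, x k ∈ K := by
    intro k
    induction k with
    | zero => exact hx0
    | succ m ih =>
      rw [hrec m]
      exact hKcv.add_smul_sub_mem ih (hxhatK _ ih) ⟨(hγ0 m).le, hγ1 m⟩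
  set r : ℕ → EuclideanSpace ℝ (Fin n) := fun k => xhat (x k) - x k with hr
  -- one-step descent inequality
  have hstep : ∀ k, U (x (k + 1)) ≤ U (x k) - γ k * c * ‖r k‖ ^ 2
      + L' / 2 * (γ k) ^ 2 * ‖r k‖ ^ 2 := by
    intro k
    have hlemma := descent_lemma U U' hU' (x k) (γ k • r k) L' ?_
    · have hnorm : ‖γ k • r k‖ = γ k * ‖r k‖ := by
        rw [norm_smul, Real.norm_eq_abs, abs_of_pos (hγ0 k)]
      have hinner : ⟪γ k • r k, U' (x k)⟫ = γ k * ⟪r k, U' (x k)⟫ := real_inner_smul_left _ _ _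
      have hd := hdesc (x k) (hxK k)
      rw [hrec k]
      calc U (x k + γ k • r k) ≤ U (x k) + ⟪γ k • r k, U' (x k)⟫ + L' / 2 * ‖γ k • r k‖ ^ 2 :=
            hlemma
        _ ≤ U (x k) - γ k * c * ‖r k‖ ^ 2 + L' / 2 * (γ k) ^ 2 * ‖r k‖ ^ 2 := by
            rw [hinner, hnorm]
            have h5 := mul_le_mul_of_nonneg_left hd (hγ0 k).le
            have hsq : (γ k * ‖r k‖) ^ 2 = γ k ^ 2 * ‖r k‖ ^ 2 := by ring
            rw [hsq]
            nlinarith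
    · intro t ht
      have hmem : x k + t • γ k • r k ∈ K := by
        rw [smul_smul]
        exact hKcv.add_smul_sub_mem (hxK k) (hxhatK _ (hxK k))
          ⟨mul_nonneg ht.1 (hγ0 k).le,
           mul_le_one₀ ht.2 (hγ0 k).le (hγ1 k)⟩
      have := hLip' _ hmem _ (hxK k)
      have heq : x k + t • γ k • r k - x k = t • γ k • r k := by abel
      rw [heq] at this
      calc ‖U' (x k + t • γ k • r k) - U' (x k)‖ ≤ L' * ‖t • γ k • r k‖ := this
        _ ≤ L' * t * ‖γ k • r k‖ := by
            rw [norm_smul, Real.norm_eq_abs, abs_of_nonneg ht.1, mul_assoc]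
  -- eventually the step is genuinely decreasing
  obtain ⟨N, hN⟩ : ∃ N, ∀ k ≥ N, γ k < c / (L' + 1) := by
    have : ∀ᶠ k in atTop, γ k < c / (L' + 1) :=
      hγto0.eventually (gt_mem_nhds (by positivity))
    exact eventually_atTop.1 this
  have hkey : ∀ k ≥ N, c / 2 * (γ k * ‖r k‖ ^ 2) ≤ U (x k) - U (x (k + 1)) := by
    intro k hk
    have h1 := hstep k
    have h2 : γ k * L' < c := by
      have h4 := hN k hk
      rw [lt_div_iff₀ (by positivity : (0:ℝ) < L' + 1)] at h4
      nlinarith [hγ0 k]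
    nlinarith [sq_nonneg (‖r k‖), (hγ0 k), mul_nonneg (hγ0 k).le (sq_nonneg ‖r k‖)]
  -- summability of γ k ‖r k‖²
  obtain ⟨B, hB⟩ := hbd
  have hBle : ∀ k, B ≤ U (x k) := fun k => hB ⟨x k, hxK k, rfl⟩
  have hf : Summable (fun k => γ k * ‖r k‖ ^ 2) := by
    rw [← summable_nat_add_iff N]
    apply summable_of_sum_range_le (c := 2 / c * (U (x N) - B))
    · intro k
      exact mul_nonneg (hγ0 _).le (sq_nonneg _)
    · intro m
      have htele : ∀ i, γ (i + N) * ‖r (i + N)‖ ^ 2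
          ≤ 2 / c * (U (x (i + N)) - U (x (i + N + 1))) := by
        intro i
        have hki := hkey (i + N) (Nat.le_add_left N i)
        have h2c : (0:ℝ) < 2 / c := by positivity
        calc γ (i + N) * ‖r (i + N)‖ ^ 2
            = 2 / c * (c / 2 * (γ (i + N) * ‖r (i + N)‖ ^ 2)) := by
              field_simp
          _ ≤ 2 / c * (U (x (i + N)) - U (x (i + N + 1))) :=
              mul_le_mul_of_nonneg_left hki h2c.le
      calc ∑ i ∈ Finset.range m, γ (i + N) * ‖r (i + N)‖ ^ 2
          ≤ ∑ i ∈ Finset.range m, 2 / c * (U (x (i + N)) - U (x (i + N + 1))) :=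
            Finset.sum_le_sum fun i _ => htele i
        _ = 2 / c * (U (x N) - U (x (m + N))) := by
            rw [← Finset.mul_sum]
            congr 1
            have := Finset.sum_range_sub' (fun i => U (x (i + N))) m
            simpa [Nat.succ_add] using this
        _ ≤ 2 / c * (U (x N) - B) := by
            have := hBle (m + N)
            have h2c : (0:ℝ) ≤ 2 / c := by positivity
            nlinarith
  -- conclude via the liminf characterization
  rw [liminf_eq]
  have hsub : {a : ℝ | ∀ᶠ k in atTop, a ≤ ‖r k‖} ⊆ Set.Iic 0 := by
    intro a ha
    rw [Set.mem_Iic]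
    by_contra hpos
    push_neg at hpos
    rw [Set.mem_setOf_eq, eventually_atTop] at ha
    obtain ⟨M, hM⟩ := ha
    apply hγdiv
    rw [← summable_nat_add_iff M]
    apply Summable.of_nonneg_of_le (fun m => (hγ0 _).le)
      (f := fun m => (1 / a ^ 2) * (γ (m + M) * ‖r (m + M)‖ ^ 2))
    · intro m
      have hra := hM (m + M) (Nat.le_add_left M m)
      have hr2 : a ^ 2 ≤ ‖r (m + M)‖ ^ 2 := by nlinarith [norm_nonneg (r (m + M))]
      have ha2 : (0:ℝ) < a ^ 2 := by positivity
      calc γ (m + M) = 1 / a ^ 2 * (γ (m + M) * a ^ 2) := by field_simp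
        _ ≤ 1 / a ^ 2 * (γ (m + M) * ‖r (m + M)‖ ^ 2) := by
            apply mul_le_mul_of_nonneg_left _ (by positivity)
            exact mul_le_mul_of_nonneg_left hr2 (hγ0 _).le
    · exact ((summable_nat_add_iff M).2 hf).mul_left _
  have h0mem : (0:ℝ) ∈ {a : ℝ | ∀ᶠ k in atTop, a ≤ ‖r k‖} :=
    Filter.Eventually.of_forall fun k => norm_nonneg _
  have hbddS : BddAbove {a : ℝ | ∀ᶠ k in atTop, a ≤ ‖r k‖} := ⟨0, fun a ha => hsub ha⟩
  exact le_antisymm (csSup_le ⟨0, h0mem⟩ fun a ha => hsub ha) (le_csSup hbddS h0mem)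
end

section
/- Let K ⊆ ℝ^n be nonempty, closed, and convex, g : ℝ^n → ℝ differentiable and strongly convex on K with modulus c > 0, and π : K → ℝ^n a map with sup_{y∈K} ‖∇g(y) + π(y)‖ ≤ M < ∞. Define x̂(y) = argmin_{x∈K} { g(x) + π(y)ᵀ(x - y) }. Then ‖x̂(y) - y‖ ≤ M/c for every y ∈ K. -/
open RealInnerProductSpace

/-- Boundedness of the best-response displacement (Proposition 1(d)). -/
theorem best_response_bounded_displacement
    {n : ℕ} (K : Set (EuclideanSpace ℝ (Fin n)))
    (hKne : K.Nonempty) (hKcl : IsClosed K) (hKcv : Convex ℝ K)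
    (g : EuclideanSpace ℝ (Fin n) → ℝ)
    (g' : EuclideanSpace ℝ (Fin n) → EuclideanSpace ℝ (Fin n))
    (hg' : ∀ x, HasGradientAt g (g' x) x)
    (c : ℝ) (hc : 0 < c)
    (hsc : ∀ x ∈ K, ∀ w ∈ K, ⟪x - w, g' x - g' w⟫ ≥ c * ‖x - w‖ ^ 2)
    (π : EuclideanSpace ℝ (Fin n) → EuclideanSpace ℝ (Fin n))
    (M : ℝ) (hM : ∀ y ∈ K, ‖g' y + π y‖ ≤ M)
    (xhat : EuclideanSpace ℝ (Fin n) → EuclideanSpace ℝ (Fin n))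
    (hxhatK : ∀ y ∈ K, xhat y ∈ K)
    (hxhatmin : ∀ y ∈ K, IsMinOn (fun x => g x + ⟪π y, x - y⟫) K (xhat y)) :
    ∀ y ∈ K, ‖xhat y - y‖ ≤ M / c := by
  intro y hy
  set x := xhat y with hx
  have hxK : x ∈ K := hxhatK y hy
  -- the objective has fderiv (toDual (g' x + π y)) at x
  have hinner : HasFDerivAt (fun z : EuclideanSpace ℝ (Fin n) => ⟪π y, z - y⟫)
      (innerSL ℝ (π y)) x := by
    have h1 : HasFDerivAt (fun z : EuclideanSpace ℝ (Fin n) => z - y)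
        (ContinuousLinearMap.id ℝ _) x := (hasFDerivAt_id x).sub_const y
    simpa [Function.comp_def] using ((innerSL ℝ (π y)).hasFDerivAt).comp x h1
  have hf : HasFDerivAt (fun z => g z + ⟪π y, z - y⟫)
      ((InnerProductSpace.toDual ℝ _ (g' x) : EuclideanSpace ℝ (Fin n) →L[ℝ] ℝ)
        + innerSL ℝ (π y)) x :=
    ((hg' x).hasFDerivAt).add hinner
  -- variational inequality
  have htc : y - x ∈ posTangentConeAt K x :=
    sub_mem_posTangentConeAt_of_segment_subset (hKcv.segment_subset hxK hy)
  have hvi : (0 : ℝ) ≤ ⟪g' x + π y, y - x⟫ := by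
    have hloc : IsLocalMinOn (fun x => g x + ⟪π y, x - y⟫) K x :=
      (hxhatmin y hy).filter_mono inf_le_right
    have := hloc.hasFDerivWithinAt_nonneg hf.hasFDerivWithinAt htc
    simpa [InnerProductSpace.toDual_apply_apply, inner_add_left] using this
  -- strong monotonicity at (x, y)
  have hmono := hsc x hxK y hy
  have key : c * ‖x - y‖ ^ 2 ≤ ⟪g' y + π y, y - x⟫ := by
    have h1 : ⟪x - y, g' x - g' y⟫
        = ⟪g' x + π y, x - y⟫ - ⟪g' y + π y, x - y⟫ := by
      rw [← inner_sub_left, add_sub_add_right_eq_sub, real_inner_comm]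
    have h2 : ⟪g' x + π y, x - y⟫ ≤ 0 := by
      rw [show y - x = -(x - y) by abel, inner_neg_right] at hvi
      linarith
    have h3 : ⟪g' y + π y, y - x⟫ = -⟪g' y + π y, x - y⟫ := by
      rw [show y - x = -(x - y) by abel, inner_neg_right]
    linarith [hmono, h1, h2, h3]
  have hcs : ⟪g' y + π y, y - x⟫ ≤ M * ‖x - y‖ := by
    calc ⟪g' y + π y, y - x⟫ ≤ ‖g' y + π y‖ * ‖y - x‖ := real_inner_le_norm _ _
      _ = ‖g' y + π y‖ * ‖x - y‖ := by rw [norm_sub_rev]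
      _ ≤ M * ‖x - y‖ := by
          have := hM y hy
          have h0 : (0:ℝ) ≤ ‖x - y‖ := norm_nonneg _
          nlinarith
  have hMnn : 0 ≤ M := le_trans (norm_nonneg _) (hM y hy)
  rcases eq_or_lt_of_le (norm_nonneg (x - y)) with h0 | h0
  · rw [← h0]; positivity
  · have : c * ‖x - y‖ ^ 2 ≤ M * ‖x - y‖ := le_trans key hcs
    rw [le_div_iff₀ hc]
    nlinarith
end

section
/- Let K ⊆ ℝ^n be closed and convex, U continuously differentiable with L-Lipschitz gradient on K and bounded below on K, x̂ : K → K satisfy (x̂(y) - y)ᵀ∇U(y) ≤ -c‖x̂(y) - y‖² with c > 0, and ‖∇U‖ ≤ G on K. Let {γ^n} ⊂ (0,1] satisfy γ^n → 0, ∑γ^n = ∞, ∑(γ^n)² < ∞, and let z^n ∈ ℝ^n satisfy ‖z^n - x̂(x^n)‖ ≤ ε^n with ∑_n ε^n γ^n < ∞ and sup_n ε^n < ∞. Define x^{n+1} = x^n + γ^n(z^n - x^n). Then ∑_n γ^n ‖x̂(x^n) - x^n‖² < ∞ and liminf_n ‖x̂(x^n) - x^n‖ = 0. -/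
open RealInnerProductSpace Filter Topology

lemma my_descent {E : Type*} [NormedAddCommGroup E] [InnerProductSpace ℝ E] [CompleteSpace E]
    (U : E → ℝ) (U' : E → E) (hU' : ∀ x, HasGradientAt U (U' x) x)
    (L : ℝ) (x v : E)
    (hLip : ∀ t ∈ Set.Icc (0:ℝ) 1, ⟪U' (x + t • v) - U' x, v⟫ ≤ L * t * ‖v‖ ^ 2) :
    U (x + v) ≤ U x + ⟪U' x, v⟫ + L / 2 * ‖v‖ ^ 2 := by
  set g : ℝ → ℝ := fun t => U (x + t • v) - t * ⟪U' x, v⟫ - L / 2 * t ^ 2 * ‖v‖ ^ 2 with hg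
  have hderiv : ∀ t : ℝ, HasDerivAt g (⟪U' (x + t • v), v⟫ - ⟪U' x, v⟫ - L * t * ‖v‖ ^ 2) t := by
    intro t
    have h1 : HasDerivAt (fun s : ℝ => x + s • v) v t := by
      simpa using ((hasDerivAt_id t).smul_const v).const_add x
    have h2 : HasDerivAt (fun s : ℝ => U (x + s • v)) ⟪U' (x + t • v), v⟫ t := by
      have := ((hU' (x + t • v)).hasFDerivAt.comp_hasDerivAt t h1)
      simp at this
      exact this
    have h3 : HasDerivAt (fun s : ℝ => s * ⟪U' x, v⟫) ⟪U' x, v⟫ t := by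
      simpa using (hasDerivAt_id t).mul_const (⟪U' x, v⟫ : ℝ)
    have h4 : HasDerivAt (fun s : ℝ => L / 2 * s ^ 2 * ‖v‖ ^ 2) (L * t * ‖v‖ ^ 2) t := by
      have : HasDerivAt (fun s : ℝ => s ^ 2) (2 * t) t := by
        simpa using hasDerivAt_pow 2 t
      have := (this.const_mul (L / 2)).mul_const (‖v‖ ^ 2)
      have e : L * t * ‖v‖ ^ 2 = L / 2 * (2 * t) * ‖v‖ ^ 2 := by ring
      rw [e]; exact this
    have h := (h2.sub h3).sub h4
    exact h
  have hanti : AntitoneOn g (Set.Icc 0 1) := by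
    apply antitoneOn_of_deriv_nonpos (convex_Icc 0 1)
    · exact fun t _ => ((hderiv t).continuousAt).continuousWithinAt
    · exact fun t _ => ((hderiv t).differentiableAt).differentiableWithinAt
    · intro t ht
      rw [(hderiv t).deriv]
      have ht' : t ∈ Set.Icc (0:ℝ) 1 := interior_subset ht
      have := hLip t ht'
      have h5 : ⟪U' (x + t • v) - U' x, v⟫ = ⟪U' (x + t • v), v⟫ - ⟪U' x, v⟫ := by
        rw [inner_sub_left]
      linarith [h5 ▸ this]
  have := hanti (Set.left_mem_Icc.2 zero_le_one) (Set.right_mem_Icc.2 zero_le_one) zero_le_one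
  simp only [hg] at this
  simp only [zero_smul, add_zero, one_smul, zero_mul, sub_zero, one_pow, mul_one] at this
  linarith

set_option maxHeartbeats 1000000 in
/-- Liminf convergence of the inexact Jacobi scheme (Theorem 2). -/
theorem inexact_jacobi_liminf_zero
    {n : ℕ} (K : Set (EuclideanSpace ℝ (Fin n)))
    (hKne : K.Nonempty) (hKcl : IsClosed K) (hKcv : Convex ℝ K)
    (U : EuclideanSpace ℝ (Fin n) → ℝ)
    (U' : EuclideanSpace ℝ (Fin n) → EuclideanSpace ℝ (Fin n))
    (hU' : ∀ x, HasGradientAt U (U' x) x)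
    (L : ℝ) (hLip : ∀ x ∈ K, ∀ y ∈ K, ‖U' x - U' y‖ ≤ L * ‖x - y‖)
    (hbd : BddBelow (U '' K))
    (G : ℝ) (hG : ∀ y ∈ K, ‖U' y‖ ≤ G)
    (xhat : EuclideanSpace ℝ (Fin n) → EuclideanSpace ℝ (Fin n))
    (hxhatK : ∀ y ∈ K, xhat y ∈ K)
    (c : ℝ) (hc : 0 < c)
    (hdesc : ∀ y ∈ K, ⟪xhat y - y, U' y⟫ ≤ -(c * ‖xhat y - y‖ ^ 2))
    (γ : ℕ → ℝ) (hγ0 : ∀ k, 0 < γ k) (hγ1 : ∀ k, γ k ≤ 1)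
    (hγto0 : Tendsto γ atTop (nhds 0))
    (hγdiv : ¬ Summable γ)
    (hγsq : Summable (fun k => (γ k) ^ 2))
    (ε : ℕ → ℝ) (hε0 : ∀ k, 0 ≤ ε k)
    (hεγ : Summable (fun k => ε k * γ k))
    (hεbd : BddAbove (Set.range ε))
    (z : ℕ → EuclideanSpace ℝ (Fin n))
    (hzK : ∀ k, z k ∈ K)
    (x : ℕ → EuclideanSpace ℝ (Fin n))
    (hx0 : x 0 ∈ K)
    (hzerr : ∀ k, ‖z k - xhat (x k)‖ ≤ ε k)
    (hrec : ∀ k, x (k + 1) = x k + γ k • (z k - x k)) :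
    Summable (fun k => γ k * ‖xhat (x k) - x k‖ ^ 2) ∧
    liminf (fun k => ‖xhat (x k) - x k‖) atTop = 0 := by
  -- setup
  obtain ⟨y₀, hy₀⟩ := hKne
  have hG0 : 0 ≤ G := le_trans (norm_nonneg _) (hG y₀ hy₀)
  obtain ⟨E, hE⟩ := hεbd
  have hE' : ∀ k, ε k ≤ E := fun k => hE (Set.mem_range_self k)
  have hE0 : 0 ≤ E := le_trans (hε0 0) (hE' 0)
  -- iterates stay in K
  have hseg : ∀ p ∈ K, ∀ q ∈ K, ∀ s ∈ Set.Icc (0:ℝ) 1, p + s • (q - p) ∈ K := by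
    intro p hp q hq s hs
    have := hKcv hp hq (by linarith [hs.2] : (0:ℝ) ≤ 1 - s) hs.1 (by ring)
    convert this using 1
    simp [smul_sub, sub_smul]
    abel
  have hxK : ∀ k, x k ∈ K := by
    intro k
    induction k with
    | zero => exact hx0
    | succ k ih =>
      rw [hrec k]
      exact hseg (x k) ih (z k) (hzK k) (γ k) ⟨le_of_lt (hγ0 k), hγ1 k⟩
  -- distance bound
  set D : ℕ → ℝ := fun k => ‖xhat (x k) - x k‖ with hD
  have hDbd : ∀ k, D k ≤ G / c := by
    intro k
    have h1 := hdesc (x k) (hxK k)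
    have h2 : -(‖xhat (x k) - x k‖ * ‖U' (x k)‖) ≤ ⟪xhat (x k) - x k, U' (x k)⟫ := by
      have := abs_real_inner_le_norm (xhat (x k) - x k) (U' (x k))
      have := neg_abs_le (⟪xhat (x k) - x k, U' (x k)⟫ : ℝ)
      linarith
    have h3 : ‖U' (x k)‖ ≤ G := hG (x k) (hxK k)
    have h4 : c * D k ^ 2 ≤ D k * G := by
      nlinarith [norm_nonneg (xhat (x k) - x k), norm_nonneg (U' (x k))]
    rw [le_div_iff₀ hc]
    nlinarith [norm_nonneg (xhat (x k) - x k)]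
  have hD0 : ∀ k, 0 ≤ D k := fun k => norm_nonneg _
  -- step inequality
  set M : ℝ := |L| / 2 * (G / c + E) ^ 2 with hM
  have hM0 : 0 ≤ M := by positivity
  set b : ℕ → ℝ := fun k => G * (ε k * γ k) + M * γ k ^ 2 with hb
  set a : ℕ → ℝ := fun k => c * (γ k * D k ^ 2) with ha
  have hstep : ∀ k, U (x (k + 1)) ≤ U (x k) - a k + b k := by
    intro k
    set v : EuclideanSpace ℝ (Fin n) := γ k • (z k - x k) with hv
    have hdlem : U (x k + v) ≤ U (x k) + ⟪U' (x k), v⟫ + L / 2 * ‖v‖ ^ 2 := by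
      apply my_descent U U' hU' L (x k) v
      intro t ht
      have hpt : x k + t • v ∈ K := by
        have : t • v = (t * γ k) • (z k - x k) := by rw [hv, smul_smul]
        rw [this]
        refine hseg (x k) (hxK k) (z k) (hzK k) (t * γ k) ⟨?_, ?_⟩
        · exact mul_nonneg ht.1 (le_of_lt (hγ0 k))
        · calc t * γ k ≤ 1 * 1 := mul_le_mul ht.2 (hγ1 k) (le_of_lt (hγ0 k)) zero_le_one
            _ = 1 := one_mul 1
      have h1 : ⟪U' (x k + t • v) - U' (x k), v⟫ ≤ ‖U' (x k + t • v) - U' (x k)‖ * ‖v‖ :=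
        real_inner_le_norm _ _
      have h2 : ‖U' (x k + t • v) - U' (x k)‖ ≤ L * ‖x k + t • v - x k‖ :=
        hLip _ hpt _ (hxK k)
      have h3 : ‖x k + t • v - x k‖ = t * ‖v‖ := by
        rw [add_sub_cancel_left, norm_smul, Real.norm_eq_abs, abs_of_nonneg ht.1]
      calc ⟪U' (x k + t • v) - U' (x k), v⟫ ≤ (L * (t * ‖v‖)) * ‖v‖ := by
            refine le_trans h1 (mul_le_mul_of_nonneg_right ?_ (norm_nonneg v))
            rw [← h3]; exact h2
        _ = L * t * ‖v‖ ^ 2 := by ring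
    rw [hrec k]
    -- bound the inner product term
    have hinner : ⟪U' (x k), v⟫ ≤ γ k * (-(c * D k ^ 2) + G * ε k) := by
      have hsplit : ⟪U' (x k), v⟫ =
          γ k * (⟪U' (x k), xhat (x k) - x k⟫ + ⟪U' (x k), z k - xhat (x k)⟫) := by
        rw [hv, real_inner_smul_right, ← inner_add_right]
        congr 1
        abel
      have ht1 : ⟪U' (x k), xhat (x k) - x k⟫ ≤ -(c * D k ^ 2) := by
        rw [real_inner_comm]; exact hdesc (x k) (hxK k)
      have ht2 : ⟪U' (x k), z k - xhat (x k)⟫ ≤ G * ε k := by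
        refine le_trans (real_inner_le_norm _ _) ?_
        exact mul_le_mul (hG (x k) (hxK k)) (hzerr k) (norm_nonneg _) hG0
      rw [hsplit]
      exact mul_le_mul_of_nonneg_left (by linarith) (le_of_lt (hγ0 k))
    -- bound the квадрат term
    have hnv : ‖v‖ ≤ γ k * (G / c + E) := by
      rw [hv, norm_smul, Real.norm_eq_abs, abs_of_pos (hγ0 k)]
      refine mul_le_mul_of_nonneg_left ?_ (le_of_lt (hγ0 k))
      calc ‖z k - x k‖ ≤ ‖z k - xhat (x k)‖ + ‖xhat (x k) - x k‖ := by
            simpa using norm_sub_le_norm_sub_add_norm_sub (z k) (xhat (x k)) (x k)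
        _ ≤ E + G / c := add_le_add (le_trans (hzerr k) (hE' k)) (hDbd k)
        _ = G / c + E := by ring
    have hsq : L / 2 * ‖v‖ ^ 2 ≤ M * γ k ^ 2 := by
      have h1 : ‖v‖ ^ 2 ≤ (γ k * (G / c + E)) ^ 2 :=
        pow_le_pow_left₀ (norm_nonneg v) hnv 2
      have h2 : L / 2 * ‖v‖ ^ 2 ≤ |L| / 2 * ‖v‖ ^ 2 := by
        have := le_abs_self L
        nlinarith [sq_nonneg ‖v‖]
      have h3 : |L| / 2 * ‖v‖ ^ 2 ≤ |L| / 2 * (γ k * (G / c + E)) ^ 2 := by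
        have := abs_nonneg L
        nlinarith
      calc L / 2 * ‖v‖ ^ 2 ≤ |L| / 2 * (γ k * (G / c + E)) ^ 2 := le_trans h2 h3
        _ = M * γ k ^ 2 := by rw [hM]; ring
    have := hdlem
    simp only [ha, hb]
    nlinarith [hγ0 k]
  -- summability of b and partial sums
  have hbsum : Summable b := by
    apply Summable.add
    · exact hεγ.mul_left G
    · exact hγsq.mul_left M
  have hb0 : ∀ k, 0 ≤ b k := by
    intro k
    have := mul_nonneg (hε0 k) (le_of_lt (hγ0 k))
    have := sq_nonneg (γ k)
    simp only [hb]
    positivity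
  have ha0 : ∀ k, 0 ≤ a k := by
    intro k
    have := hγ0 k
    have := hD0 k
    simp only [ha]
    positivity
  obtain ⟨m, hm⟩ := hbd
  have key : ∀ N, ∑ i ∈ Finset.range N, a i ≤ U (x 0) - U (x N) + ∑ i ∈ Finset.range N, b i := by
    intro N
    induction N with
    | zero => simp
    | succ N ih =>
      rw [Finset.sum_range_succ, Finset.sum_range_succ]
      have := hstep N
      linarith
  have hbound : ∀ N, ∑ i ∈ Finset.range N, a i ≤ U (x 0) - m + ∑' i, b i := by
    intro N
    have h1 : m ≤ U (x N) := hm (Set.mem_image_of_mem U (hxK N))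
    have h2 : ∑ i ∈ Finset.range N, b i ≤ ∑' i, b i := Summable.sum_le_tsum _ (fun i _ => hb0 i) hbsum
    linarith [key N]
  have hasum : Summable a := summable_of_sum_range_le ha0 hbound
  have hsum1 : Summable (fun k => γ k * D k ^ 2) := by
    have := hasum.mul_left c⁻¹
    refine this.congr fun k => ?_
    simp only [ha]
    field_simp
  refine ⟨hsum1, ?_⟩
  -- liminf = 0
  have hbdd : IsBoundedUnder (· ≤ ·) atTop D := isBoundedUnder_of ⟨G / c, fun k => hDbd k⟩
  have hcobdd : IsCoboundedUnder (· ≥ ·) atTop D := hbdd.isCoboundedUnder_ge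
  have hge : 0 ≤ liminf D atTop :=
    le_liminf_of_le hcobdd (Eventually.of_forall hD0)
  have hle : liminf D atTop ≤ 0 := by
    by_contra h
    push_neg at h
    set l := liminf D atTop with hl
    have hev : ∀ᶠ k in atTop, l / 2 < D k :=
      eventually_lt_of_lt_liminf (by linarith) (isBoundedUnder_of ⟨0, fun k => hD0 k⟩)
    obtain ⟨N, hN⟩ := eventually_atTop.1 hev
    have hq : (0:ℝ) < l / 2 := by linarith
    have htail : Summable (fun k => γ (k + N) * D (k + N) ^ 2) :=
      (summable_nat_add_iff N).2 hsum1
    have hγtail : Summable (fun k => γ (k + N)) := by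
      refine Summable.of_nonneg_of_le (fun k => le_of_lt (hγ0 _))
        (fun k => ?_) (htail.mul_left ((l / 2)⁻¹ ^ 2))
      have hDk : l / 2 < D (k + N) := hN (k + N) (Nat.le_add_left N k)
      rw [inv_pow, inv_mul_eq_div, le_div_iff₀ (by positivity)]
      have hp := hγ0 (k + N)
      have h2 : (l / 2) ^ 2 ≤ D (k + N) ^ 2 := by nlinarith
      nlinarith [mul_le_mul_of_nonneg_left h2 hp.le]
    exact hγdiv ((summable_nat_add_iff N).1 hγtail)
  exact le_antisymm hle hge
end
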